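/- arXiv:1610.09682 — 2 statements merged into one kernel-verified Lean document; each statement's English description precedes it below -/
import Mathlib

section
/- If h satisfies the Codazzi condition, then the product 𝒟 on one-forms is curvature-free: for all smooth one-forms α, β, γ on E, 𝒟_α(𝒟_β γ) − 𝒟_β(𝒟_α γ) − 𝒟_{𝒟_αβ − 𝒟_βα} γ = 0. (This is the conclusion of Theorem 'new', Section 6, that (T*M, M, h_#, 𝒟) is a left symmetric algebroid, stated in the flat local model E.) -/
/-!
Statement 3: if the symmetric bivector field `h` on the flat local model `E`
satisfies the Codazzi condition, then the product `𝒟` on one-forms is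
curvature-free (Theorem `new`, Section 6: `(T*M, M, h_#, 𝒟)` is a left
symmetric algebroid).

Here `h` is encoded by the smooth field `hs : E → (E* →L E)` of its associated
sharp maps, with `h(x)(α,β) = β (hs x α)`; symmetry of `h` is the hypothesis
`β (hs x α) = α (hs x β)`.
-/

noncomputable section

variable {E : Type*} [NormedAddCommGroup E] [NormedSpace ℝ E]

/-- The scalar function `x ↦ h(x)(α(x), β(x))`. -/
def hfun (hs : E → (E →L[ℝ] ℝ) →L[ℝ] E) (α β : E → (E →L[ℝ] ℝ)) (x : E) : ℝ :=
  (β x) (hs x (α x))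

/-- The covariant derivative `(∇_v h)(α,β)(x)` of `h` in the constant direction `v`. -/
def nablaH (hs : E → (E →L[ℝ] ℝ) →L[ℝ] E) (v : E) (α β : E → (E →L[ℝ] ℝ)) (x : E) : ℝ :=
  fderiv ℝ (hfun hs α β) x v
    - (β x) (hs x (fderiv ℝ α x v))
    - (fderiv ℝ β x v) (hs x (α x))

/-- The Codazzi condition for `h`. -/
def Codazzi (hs : E → (E →L[ℝ] ℝ) →L[ℝ] E) : Prop :=
  ∀ α β γ : E → (E →L[ℝ] ℝ), ContDiff ℝ (⊤ : ℕ∞) α → ContDiff ℝ (⊤ : ℕ∞) β →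
    ContDiff ℝ (⊤ : ℕ∞) γ → ∀ x : E,
      nablaH hs (hs x (α x)) β γ x = nablaH hs (hs x (β x)) α γ x

/-- The product `𝒟` on one-forms:
`(𝒟_α β)(x)(v) = (∇_v h)(α,β)(x) + (Dβ(x)(h_#α(x)))(v)`. -/
def Dop (hs : E → (E →L[ℝ] ℝ) →L[ℝ] E) (α β : E → (E →L[ℝ] ℝ)) (x : E) :
    E →L[ℝ] ℝ :=
  fderiv ℝ (hfun hs α β) x
    - (β x).comp ((hs x).comp (fderiv ℝ α x))
    - (fderiv ℝ β x).flip (hs x (α x))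
    + fderiv ℝ β x (hs x (α x))

/-! ### Auxiliary lemmas -/


/-- workhorse: derivative of a pointwise clm application, applied to a direction. -/
lemma fd_apply {F G : Type*} [NormedAddCommGroup F] [NormedSpace ℝ F]
    [NormedAddCommGroup G] [NormedSpace ℝ G] {c : E → F →L[ℝ] G} {u : E → F} {x : E}
    (hc : DifferentiableAt ℝ c x) (hu : DifferentiableAt ℝ u x) (v : E) :
    fderiv ℝ (fun y => c y (u y)) x v = c x (fderiv ℝ u x v) + fderiv ℝ c x v (u x) := by
  rw [fderiv_clm_apply hc hu]; simp

lemma fd_apply_const {F G : Type*} [NormedAddCommGroup F] [NormedSpace ℝ F]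
    [NormedAddCommGroup G] [NormedSpace ℝ G] {c : E → F →L[ℝ] G} {x : E}
    (hc : DifferentiableAt ℝ c x) (b : F) (v : E) :
    fderiv ℝ (fun y => c y b) x v = fderiv ℝ c x v b := by
  rw [fd_apply hc (differentiableAt_const b) v]; simp

variable {hs : E → (E →L[ℝ] ℝ) →L[ℝ] E}

instance instNACG3 : NormedAddCommGroup (E →L[ℝ] (E →L[ℝ] ℝ) →L[ℝ] E) :=
  ContinuousLinearMap.toNormedAddCommGroup (E := E) (F := (E →L[ℝ] ℝ) →L[ℝ] E) (σ₁₂ := RingHom.id ℝ)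

instance instNS3 : NormedSpace ℝ (E →L[ℝ] (E →L[ℝ] ℝ) →L[ℝ] E) :=
  ContinuousLinearMap.toNormedSpace (E := E) (F := (E →L[ℝ] ℝ) →L[ℝ] E) (σ₁₂ := RingHom.id ℝ)

lemma dhfun {α β : E → (E →L[ℝ] ℝ)} {x : E} (Hs : DifferentiableAt ℝ hs x)
    (hα : DifferentiableAt ℝ α x) (hβ : DifferentiableAt ℝ β x) (v : E) :
    fderiv ℝ (hfun hs α β) x v
      = (β x) (hs x (fderiv ℝ α x v)) + (β x) (fderiv ℝ hs x v (α x))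
        + (fderiv ℝ β x v) (hs x (α x)) := by
  have hu : DifferentiableAt ℝ (fun y => hs y (α y)) x := Hs.clm_apply hα
  have h1 : fderiv ℝ (hfun hs α β) x v
      = (β x) (fderiv ℝ (fun y => hs y (α y)) x v) + (fderiv ℝ β x v) (hs x (α x)) :=
    fd_apply hβ hu v
  rw [h1, fd_apply Hs hα v]
  simp [add_comm]

lemma Dop_apply {α β : E → (E →L[ℝ] ℝ)} {x : E} (Hs : DifferentiableAt ℝ hs x)
    (hα : DifferentiableAt ℝ α x) (hβ : DifferentiableAt ℝ β x) (v : E) :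
    Dop hs α β x v = (β x) (fderiv ℝ hs x v (α x)) + fderiv ℝ β x (hs x (α x)) v := by
  simp only [Dop, ContinuousLinearMap.add_apply, ContinuousLinearMap.sub_apply,
    ContinuousLinearMap.comp_apply, ContinuousLinearMap.flip_apply]
  rw [dhfun Hs hα hβ v]
  ring

/-- Differentiability of `y ↦ Dop hs α β y`. -/
lemma Dop_differentiable (hsm : ContDiff ℝ (⊤:ℕ∞) hs) {α β : E → (E →L[ℝ] ℝ)}
    (hα : ContDiff ℝ (⊤:ℕ∞) α) (hβ : ContDiff ℝ (⊤:ℕ∞) β) :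
    Differentiable ℝ (fun y => Dop hs α β y) := by
  have hα1 : ContDiff ℝ (⊤:ℕ∞) (fderiv ℝ α) := hα.fderiv_right (by simp)
  have hβ1 : ContDiff ℝ (⊤:ℕ∞) (fderiv ℝ β) := hβ.fderiv_right (by simp)
  have hfun1 : ContDiff ℝ (⊤:ℕ∞) (hfun hs α β) := hβ.clm_apply (hsm.clm_apply hα)
  have hA : ContDiff ℝ (⊤:ℕ∞) (fun y => fderiv ℝ (hfun hs α β) y) :=
    hfun1.fderiv_right (by simp)
  have hB : ContDiff ℝ (⊤:ℕ∞) (fun y => (β y).comp ((hs y).comp (fderiv ℝ α y))) :=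
    hβ.clm_comp (hsm.clm_comp hα1)
  have hflip : ContDiff ℝ (⊤:ℕ∞) (fun y => (fderiv ℝ β y).flip) := by
    have h2 : ContDiff ℝ (⊤:ℕ∞) (⇑(ContinuousLinearMap.flipₗᵢ ℝ E E ℝ)) :=
      @LinearIsometryEquiv.contDiff ℝ (E →L[ℝ] E →L[ℝ] ℝ) (E →L[ℝ] E →L[ℝ] ℝ) _ _ _ _ _ _
        (ContinuousLinearMap.flipₗᵢ ℝ E E ℝ)
    exact h2.comp hβ1
  have hC : ContDiff ℝ (⊤:ℕ∞) (fun y => (fderiv ℝ β y).flip (hs y (α y))) :=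
    hflip.clm_apply (hsm.clm_apply hα)
  have hD : ContDiff ℝ (⊤:ℕ∞) (fun y => fderiv ℝ β y (hs y (α y))) :=
    hβ1.clm_apply (hsm.clm_apply hα)
  exact (((hA.sub hB).sub hC).add hD).differentiable (by decide)

lemma nabla_const (Hs : Differentiable ℝ hs) (v : E) (b g : E →L[ℝ] ℝ) (x : E) :
    nablaH hs v (fun _ => b) (fun _ => g) x = g (fderiv ℝ hs x v b) := by
  have h1 : fderiv ℝ (hfun hs (fun _ => b) (fun _ => g)) x v
      = g (hs x (fderiv ℝ (fun _ : E => b) x v)) + g (fderiv ℝ hs x v b)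
        + (fderiv ℝ (fun _ : E => g) x v) (hs x b) :=
    dhfun (Hs x) (differentiableAt_const b) (differentiableAt_const g) v
  simp only [nablaH, h1, fderiv_const, Pi.zero_apply, ContinuousLinearMap.zero_apply,
    map_zero, zero_add, add_zero, ContinuousLinearMap.map_zero]
  ring

/-- Pointwise form of the Codazzi condition. -/
lemma codazzi_pt [FiniteDimensional ℝ E] (hsm : ContDiff ℝ (⊤:ℕ∞) hs) (hcod : Codazzi hs)
    (x : E) (a b : E →L[ℝ] ℝ) :
    fderiv ℝ hs x (hs x a) b = fderiv ℝ hs x (hs x b) a := by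
  have Hs : Differentiable ℝ hs := hsm.differentiable (by decide)
  rw [NormedSpace.eq_iff_forall_dual_eq ℝ]
  intro g
  have h := hcod (fun _ => a) (fun _ => b) (fun _ => g)
    contDiff_const contDiff_const contDiff_const x
  rwa [nabla_const Hs _ b g x, nabla_const Hs _ a g x] at h

/-- Derivative of the symmetry of `h`. -/
lemma hsym_d (Hs : Differentiable ℝ hs)
    (hsym : ∀ (x : E) (α β : E →L[ℝ] ℝ), β (hs x α) = α (hs x β))
    (x v : E) (a b : E →L[ℝ] ℝ) :
    b (fderiv ℝ hs x v a) = a (fderiv ℝ hs x v b) := by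
  have hF : ∀ c d : E →L[ℝ] ℝ, fderiv ℝ (fun y => d (hs y c)) x v = d (fderiv ℝ hs x v c) := by
    intro c d
    have h1 : fderiv ℝ (fun y => d (hs y c)) x v
        = d (fderiv ℝ (fun y => hs y c) x v) + fderiv ℝ (fun _ : E => d) x v (hs x c) :=
      fd_apply (differentiableAt_const d) ((Hs x).clm_apply (differentiableAt_const c)) v
    rw [h1, fd_apply_const (Hs x) c v]
    simp
  have h2 : (fun y => b (hs y a)) = fun y => a (hs y b) := by
    funext y; exact hsym y a b
  calc b (fderiv ℝ hs x v a) = fderiv ℝ (fun y => b (hs y a)) x v := (hF a b).symm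
    _ = fderiv ℝ (fun y => a (hs y b)) x v := by rw [h2]
    _ = a (fderiv ℝ hs x v b) := hF b a

/-- Differentiated pointwise Codazzi identity. -/
lemma codazzi_deriv [FiniteDimensional ℝ E] (hsm : ContDiff ℝ (⊤:ℕ∞) hs) (hcod : Codazzi hs)
    (x v : E) (a b : E →L[ℝ] ℝ) :
    fderiv ℝ hs x (fderiv ℝ hs x v a) b + fderiv ℝ (fderiv ℝ hs) x v (hs x a) b
      = fderiv ℝ hs x (fderiv ℝ hs x v b) a + fderiv ℝ (fderiv ℝ hs) x v (hs x b) a := by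
  have Hs : Differentiable ℝ hs := hsm.differentiable (by decide)
  have H1 : ContDiff ℝ (⊤:ℕ∞) (fderiv ℝ hs) := hsm.fderiv_right (by simp)
  have H1d : Differentiable ℝ (fderiv ℝ hs) := H1.differentiable (by decide)
  have key : ∀ c : E →L[ℝ] ℝ, fderiv ℝ (fun y => fderiv ℝ hs y (hs y c)) x v
      = fderiv ℝ hs x (fderiv ℝ hs x v c) + fderiv ℝ (fderiv ℝ hs) x v (hs x c) := by
    intro c
    have h1 : fderiv ℝ (fun y => fderiv ℝ hs y (hs y c)) x v
        = fderiv ℝ hs x (fderiv ℝ (fun y => hs y c) x v)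
          + fderiv ℝ (fderiv ℝ hs) x v (hs x c) :=
      fd_apply (G := (E →L[ℝ] ℝ) →L[ℝ] E) (H1d x) ((Hs x).clm_apply (differentiableAt_const c)) v
    rw [h1, fd_apply_const (Hs x) c v]
  have hFG : (fun y => fderiv ℝ hs y (hs y a) b) = fun y => fderiv ℝ hs y (hs y b) a := by
    funext y; rw [codazzi_pt hsm hcod y a b]
  have hda : DifferentiableAt ℝ (fun y => fderiv ℝ hs y (hs y a)) x :=
    DifferentiableAt.clm_apply (H := (E →L[ℝ] ℝ) →L[ℝ] E) (H1d x) ((Hs x).clm_apply (differentiableAt_const a))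
  have hdb : DifferentiableAt ℝ (fun y => fderiv ℝ hs y (hs y b)) x :=
    DifferentiableAt.clm_apply (H := (E →L[ℝ] ℝ) →L[ℝ] E) (H1d x) ((Hs x).clm_apply (differentiableAt_const b))
  have e1 : fderiv ℝ (fun y => fderiv ℝ hs y (hs y a) b) x v
      = fderiv ℝ (fun y => fderiv ℝ hs y (hs y a)) x v b := fd_apply_const hda b v
  have e2 : fderiv ℝ (fun y => fderiv ℝ hs y (hs y b) a) x v
      = fderiv ℝ (fun y => fderiv ℝ hs y (hs y b)) x v a := fd_apply_const hdb a v
  have e3 := congrArg (fun F => fderiv ℝ F x v) hFG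
  rw [e1, key a] at e3
  rw [e2, key b] at e3
  simpa using e3

/-- Full expansion of the derivative of `y ↦ Dop hs β γ y`, applied to `w`, `v`. -/
lemma Ddop (hsm : ContDiff ℝ (⊤:ℕ∞) hs) {β γ : E → (E →L[ℝ] ℝ)}
    (hβ : ContDiff ℝ (⊤:ℕ∞) β) (hγ : ContDiff ℝ (⊤:ℕ∞) γ) (x w v : E) :
    fderiv ℝ (fun y => Dop hs β γ y) x w v
      = (γ x) (fderiv ℝ hs x v (fderiv ℝ β x w))
        + (γ x) (fderiv ℝ (fderiv ℝ hs) x w v (β x))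
        + (fderiv ℝ γ x w) (fderiv ℝ hs x v (β x))
        + fderiv ℝ γ x (hs x (fderiv ℝ β x w)) v
        + fderiv ℝ γ x (fderiv ℝ hs x w (β x)) v
        + fderiv ℝ (fderiv ℝ γ) x w (hs x (β x)) v := by
  have Hs : Differentiable ℝ hs := hsm.differentiable (by decide)
  have H1 : ContDiff ℝ (⊤:ℕ∞) (fderiv ℝ hs) := hsm.fderiv_right (by simp)
  have H1d : Differentiable ℝ (fderiv ℝ hs) := H1.differentiable (by decide)
  have hβd : Differentiable ℝ β := hβ.differentiable (by decide)
  have hγd : Differentiable ℝ γ := hγ.differentiable (by decide)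
  have hγ1 : ContDiff ℝ (⊤:ℕ∞) (fderiv ℝ γ) := hγ.fderiv_right (by simp)
  have hγ1d : Differentiable ℝ (fderiv ℝ γ) := hγ1.differentiable (by decide)
  have hδ : DifferentiableAt ℝ (fun y => Dop hs β γ y) x :=
    (Dop_differentiable hsm hβ hγ) x
  have step1 : fderiv ℝ (fun y => Dop hs β γ y v) x w
      = fderiv ℝ (fun y => Dop hs β γ y) x w v := fd_apply_const hδ v w
  have step2 : (fun y => Dop hs β γ y v)
      = fun y => (γ y) (fderiv ℝ hs y v (β y)) + fderiv ℝ γ y (hs y (β y)) v :=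
    funext fun y => Dop_apply (Hs y) (hβd y) (hγd y) v
  -- differentiability of the pieces
  have hc : DifferentiableAt ℝ (fun y => fderiv ℝ hs y v) x :=
    DifferentiableAt.clm_apply (G := E) (H := (E →L[ℝ] ℝ) →L[ℝ] E) (c := fderiv ℝ hs) (u := fun _ => v)
      (H1d x) (differentiableAt_const v)
  have hu : DifferentiableAt ℝ (fun y => fderiv ℝ hs y v (β y)) x := hc.clm_apply (hβd x)
  have hc3 : DifferentiableAt ℝ (fun y => fderiv ℝ γ y (hs y (β y))) x :=
    (hγ1d x).clm_apply ((Hs x).clm_apply (hβd x))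
  have hs1 : DifferentiableAt ℝ (fun y => (γ y) (fderiv ℝ hs y v (β y))) x :=
    (hγd x).clm_apply hu
  have hs2 : DifferentiableAt ℝ (fun y => fderiv ℝ γ y (hs y (β y)) v) x :=
    hc3.clm_apply (differentiableAt_const v)
  have f1 : fderiv ℝ (fun y => (γ y) (fderiv ℝ hs y v (β y))) x w
      = (γ x) (fderiv ℝ (fun y => fderiv ℝ hs y v (β y)) x w)
        + (fderiv ℝ γ x w) (fderiv ℝ hs x v (β x)) := fd_apply (hγd x) hu w
  have f2 : fderiv ℝ (fun y => fderiv ℝ hs y v (β y)) x w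
      = fderiv ℝ hs x v (fderiv ℝ β x w)
        + fderiv ℝ (fun y => fderiv ℝ hs y v) x w (β x) := fd_apply hc (hβd x) w
  have f3 : fderiv ℝ (fun y => fderiv ℝ hs y v) x w = fderiv ℝ (fderiv ℝ hs) x w v :=
    fd_apply_const (G := (E →L[ℝ] ℝ) →L[ℝ] E) (c := fderiv ℝ hs) (H1d x) v w
  have g1 : fderiv ℝ (fun y => fderiv ℝ γ y (hs y (β y)) v) x w
      = fderiv ℝ (fun y => fderiv ℝ γ y (hs y (β y))) x w v := fd_apply_const hc3 v w
  have g2 : fderiv ℝ (fun y => fderiv ℝ γ y (hs y (β y))) x w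
      = fderiv ℝ γ x (fderiv ℝ (fun y => hs y (β y)) x w)
        + fderiv ℝ (fderiv ℝ γ) x w (hs x (β x)) :=
    fd_apply (hγ1d x) ((Hs x).clm_apply (hβd x)) w
  have g3 : fderiv ℝ (fun y => hs y (β y)) x w
      = hs x (fderiv ℝ β x w) + fderiv ℝ hs x w (β x) := fd_apply (Hs x) (hβd x) w
  have hsum : fderiv ℝ (fun y => Dop hs β γ y v) x w
      = fderiv ℝ (fun y => (γ y) (fderiv ℝ hs y v (β y))) x w
        + fderiv ℝ (fun y => fderiv ℝ γ y (hs y (β y)) v) x w := by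
    rw [step2, fderiv_fun_add hs1 hs2]; rfl
  rw [← step1, hsum, f1, f2, f3, g1, g2, g3]
  simp only [map_add, ContinuousLinearMap.add_apply]
  ring

theorem stmt3 [FiniteDimensional ℝ E]
    (hs : E → (E →L[ℝ] ℝ) →L[ℝ] E) (hsm : ContDiff ℝ (⊤ : ℕ∞) hs)
    (hsym : ∀ (x : E) (α β : E →L[ℝ] ℝ), β (hs x α) = α (hs x β))
    (hcod : Codazzi hs) :
    ∀ α β γ : E → (E →L[ℝ] ℝ), ContDiff ℝ (⊤ : ℕ∞) α → ContDiff ℝ (⊤ : ℕ∞) β →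
      ContDiff ℝ (⊤ : ℕ∞) γ → ∀ x : E,
        Dop hs α (fun y => Dop hs β γ y) x - Dop hs β (fun y => Dop hs α γ y) x
          - Dop hs (fun y => Dop hs α β y - Dop hs β α y) γ x = 0 := by
  intro α β γ hα hβ hγ x
  have Hs : Differentiable ℝ hs := hsm.differentiable (by decide)
  have hαd : Differentiable ℝ α := hα.differentiable (by decide)
  have hβd : Differentiable ℝ β := hβ.differentiable (by decide)
  have hγd : Differentiable ℝ γ := hγ.differentiable (by decide)
  have hδ1d : DifferentiableAt ℝ (fun y => Dop hs β γ y) x := Dop_differentiable hsm hβ hγ x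
  have hδ2d : DifferentiableAt ℝ (fun y => Dop hs α γ y) x := Dop_differentiable hsm hα hγ x
  have hεd : DifferentiableAt ℝ (fun y => Dop hs α β y - Dop hs β α y) x :=
    (Dop_differentiable hsm hα hβ x).sub (Dop_differentiable hsm hβ hα x)
  have symhs : ∀ u u' : E, fderiv ℝ (fderiv ℝ hs) x u u' = fderiv ℝ (fderiv ℝ hs) x u' u :=
    hsm.contDiffAt.isSymmSndFDerivAt (by rw [minSmoothness_of_isRCLikeNormedField]; exact WithTop.coe_le_coe.mpr le_top)
  have symγ : ∀ u u' : E, fderiv ℝ (fderiv ℝ γ) x u u' = fderiv ℝ (fderiv ℝ γ) x u' u :=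
    hγ.contDiffAt.isSymmSndFDerivAt (by rw [minSmoothness_of_isRCLikeNormedField]; exact WithTop.coe_le_coe.mpr le_top)
  ext v
  simp only [ContinuousLinearMap.sub_apply, ContinuousLinearMap.zero_apply]
  -- T1
  have hT1 : Dop hs α (fun y => Dop hs β γ y) x v
      = Dop hs β γ x (fderiv ℝ hs x v (α x))
        + fderiv ℝ (fun y => Dop hs β γ y) x (hs x (α x)) v :=
    Dop_apply (Hs x) (hαd x) hδ1d v
  have hval1 : Dop hs β γ x (fderiv ℝ hs x v (α x))
      = (γ x) (fderiv ℝ hs x (fderiv ℝ hs x v (α x)) (β x))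
        + fderiv ℝ γ x (hs x (β x)) (fderiv ℝ hs x v (α x)) :=
    Dop_apply (Hs x) (hβd x) (hγd x) _
  have hder1 := Ddop hsm hβ hγ x (hs x (α x)) v
  -- T2
  have hT2 : Dop hs β (fun y => Dop hs α γ y) x v
      = Dop hs α γ x (fderiv ℝ hs x v (β x))
        + fderiv ℝ (fun y => Dop hs α γ y) x (hs x (β x)) v :=
    Dop_apply (Hs x) (hβd x) hδ2d v
  have hval2 : Dop hs α γ x (fderiv ℝ hs x v (β x))
      = (γ x) (fderiv ℝ hs x (fderiv ℝ hs x v (β x)) (α x))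
        + fderiv ℝ γ x (hs x (α x)) (fderiv ℝ hs x v (β x)) :=
    Dop_apply (Hs x) (hαd x) (hγd x) _
  have hder2 := Ddop hsm hα hγ x (hs x (β x)) v
  -- T3
  have hεv : Dop hs α β x - Dop hs β α x
      = fderiv ℝ β x (hs x (α x)) - fderiv ℝ α x (hs x (β x)) := by
    ext v'
    simp only [ContinuousLinearMap.sub_apply]
    rw [Dop_apply (Hs x) (hαd x) (hβd x) v', Dop_apply (Hs x) (hβd x) (hαd x) v',
      hsym_d Hs hsym x v' (α x) (β x)]
    ring
  have hT3 : Dop hs (fun y => Dop hs α β y - Dop hs β α y) γ x v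
      = (γ x) (fderiv ℝ hs x v (Dop hs α β x - Dop hs β α x))
        + fderiv ℝ γ x (hs x (Dop hs α β x - Dop hs β α x)) v :=
    Dop_apply (Hs x) hεd (hγd x) v
  rw [hεv] at hT3
  rw [hT1, hT2, hT3, hval1, hval2, hder1, hder2]
  simp only [map_sub, ContinuousLinearMap.sub_apply]
  -- symmetry rewrites
  rw [symhs (hs x (α x)) v, symhs (hs x (β x)) v,
    symγ (hs x (β x)) (hs x (α x)),
    codazzi_pt hsm hcod x (α x) (β x)]
  -- differentiated Codazzi, applied to γ x
  have I1 := codazzi_deriv hsm hcod x v (α x) (β x)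
  have I1' : (γ x) (fderiv ℝ hs x (fderiv ℝ hs x v (α x)) (β x))
        + (γ x) (fderiv ℝ (fderiv ℝ hs) x v (hs x (α x)) (β x))
      = (γ x) (fderiv ℝ hs x (fderiv ℝ hs x v (β x)) (α x))
        + (γ x) (fderiv ℝ (fderiv ℝ hs) x v (hs x (β x)) (α x)) := by
    have := congrArg (γ x) I1
    simpa [map_add] using this
  linarith [I1']

end
end

section
/- Assume h satisfies the Codazzi condition. Fix x ∈ E and set 𝔤_x = {a ∈ E* : h_#(x)(a) = 0}. Then: (1) for all a, b ∈ 𝔤_x and any smooth one-forms α, β with α(x) = a and β(x) = b, the covector (𝒟_α β)(x) does not depend on the choice of the extensions α and β; (2) (𝒟_α β)(x) belongs to 𝔤_x; (3) the resulting product a ∘ b := (𝒟_α β)(x) makes 𝔤_x into a commutative and associative (not necessarily unital) ℝ-algebra. (The unnumbered Proposition at the beginning of Section 7, in the flat local model E.) -/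
/-!
Statement 7: if `h` satisfies the Codazzi condition then, for each `x`, the
kernel `𝔤_x = ker h_#(x)` carries a well-defined product `a ∘ b = (𝒟_α β)(x)`
(for any smooth extensions `α, β` of `a, b`), which takes values in `𝔤_x` and
is commutative and associative.
-/

noncomputable section

variable {E : Type*} [NormedAddCommGroup E] [NormedSpace ℝ E]

lemma cd_hasFDerivAt {F : Type*} [NormedAddCommGroup F] [NormedSpace ℝ F]
    {f : E → F} (hf : ContDiff ℝ (⊤ : ℕ∞) f) (x : E) :
    HasFDerivAt f (fderiv ℝ f x) x :=
  (hf.differentiable (by simp) x).hasFDerivAt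

/-- Key evaluation: if `h_#(x)(α(x)) = 0` then `(𝒟_α β)(x)(v) = β(x)((D_v h_#)(α(x)))`. -/
lemma keyEval (hs : E → (E →L[ℝ] ℝ) →L[ℝ] E) (hsm : ContDiff ℝ (⊤ : ℕ∞) hs)
    {α β : E → (E →L[ℝ] ℝ)} (hα : ContDiff ℝ (⊤ : ℕ∞) α) (hβ : ContDiff ℝ (⊤ : ℕ∞) β)
    {x : E} (h0 : hs x (α x) = 0) (v : E) :
    Dop hs α β x v = (β x) ((fderiv ℝ hs x v) (α x)) := by
  have H1 : HasFDerivAt (fun y => hs y (α y))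
      ((hs x).comp (fderiv ℝ α x) + (fderiv ℝ hs x).flip (α x)) x :=
    (cd_hasFDerivAt hsm x).clm_apply (cd_hasFDerivAt hα x)
  have H2 : HasFDerivAt (hfun hs α β)
      ((β x).comp ((hs x).comp (fderiv ℝ α x) + (fderiv ℝ hs x).flip (α x)) +
        (fderiv ℝ β x).flip (hs x (α x))) x :=
    (cd_hasFDerivAt hβ x).clm_apply H1
  have hf := H2.fderiv
  simp only [Dop, ContinuousLinearMap.add_apply, ContinuousLinearMap.sub_apply, hf,
    ContinuousLinearMap.comp_apply, ContinuousLinearMap.flip_apply, h0, map_zero, map_add,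
    ContinuousLinearMap.zero_apply]
  ring

/-- Symmetry of `D_v h_#` as a bilinear form on the dual. -/
lemma dsym (hs : E → (E →L[ℝ] ℝ) →L[ℝ] E) (hsm : ContDiff ℝ (⊤ : ℕ∞) hs)
    (hsym : ∀ (x : E) (α β : E →L[ℝ] ℝ), β (hs x α) = α (hs x β))
    (x v : E) (a b : E →L[ℝ] ℝ) :
    b (fderiv ℝ hs x v a) = a (fderiv ℝ hs x v b) := by
  have key : ∀ c d : E →L[ℝ] ℝ, HasFDerivAt (fun y => d (hs y c))
      (d.comp ((hs x).comp (0 : E →L[ℝ] (E →L[ℝ] ℝ)) + (fderiv ℝ hs x).flip c)) x :=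
    fun c d => d.hasFDerivAt.comp x
      ((cd_hasFDerivAt hsm x).clm_apply (hasFDerivAt_const c x))
  have h1 := key a b
  have h2 : HasFDerivAt (fun y => b (hs y a))
      (a.comp ((hs x).comp (0 : E →L[ℝ] (E →L[ℝ] ℝ)) + (fderiv ℝ hs x).flip b)) x := by
    have := key b a
    have he : (fun y => a (hs y b)) = (fun y => b (hs y a)) := by
      funext y; exact (hsym y a b).symm
    rwa [he] at this
  have := h1.unique h2
  have := congrFun (congrArg DFunLike.coe this) v
  simpa using this

/-- Pointwise Codazzi identity, vector-valued. -/
lemma codVec (hs : E → (E →L[ℝ] ℝ) →L[ℝ] E) (hsm : ContDiff ℝ (⊤ : ℕ∞) hs)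
    (hcod : Codazzi hs) (x : E) (a b : E →L[ℝ] ℝ) :
    fderiv ℝ hs x (hs x a) b = fderiv ℝ hs x (hs x b) a := by
  rw [NormedSpace.eq_iff_forall_dual_eq ℝ]
  intro c
  have nconst : ∀ (v : E) (p q : E →L[ℝ] ℝ),
      nablaH hs v (fun _ => p) (fun _ => q) x = q (fderiv ℝ hs x v p) := by
    intro v p q
    have H : HasFDerivAt (fun y => q (hs y p))
        (q.comp ((hs x).comp (0 : E →L[ℝ] (E →L[ℝ] ℝ)) + (fderiv ℝ hs x).flip p)) x :=
      q.hasFDerivAt.comp x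
        ((cd_hasFDerivAt hsm x).clm_apply (hasFDerivAt_const p x))
    have hf : fderiv ℝ (hfun hs (fun _ => p) (fun _ => q)) x
        = q.comp ((hs x).comp (0 : E →L[ℝ] (E →L[ℝ] ℝ)) + (fderiv ℝ hs x).flip p) :=
      H.fderiv
    simp [nablaH, hf]
  have := hcod (fun _ => a) (fun _ => b) (fun _ => c)
    contDiff_const contDiff_const contDiff_const x
  rwa [nconst, nconst] at this

/-- Differentiated Codazzi identity at a point where `h_#` kills `a` and `c`. -/
lemma codDiff (hs : E → (E →L[ℝ] ℝ) →L[ℝ] E) (hsm : ContDiff ℝ (⊤ : ℕ∞) hs)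
    (hcod : Codazzi hs) (x : E) (a c : E →L[ℝ] ℝ)
    (ha : hs x a = 0) (hc : hs x c = 0) (v : E) :
    fderiv ℝ hs x (fderiv ℝ hs x v a) c = fderiv ℝ hs x (fderiv ℝ hs x v c) a := by
  letI : NormedAddCommGroup (E →L[ℝ] ((E →L[ℝ] ℝ) →L[ℝ] E)) :=
    @ContinuousLinearMap.toNormedAddCommGroup ℝ ℝ E ((E →L[ℝ] ℝ) →L[ℝ] E) _ _ _ _ _ _
      (RingHom.id ℝ) _
  letI : NormedSpace ℝ (E →L[ℝ] ((E →L[ℝ] ℝ) →L[ℝ] E)) :=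
    ContinuousLinearMap.toNormedSpace (𝕜 := ℝ) (𝕜₂ := ℝ) (E := E)
      (F := (E →L[ℝ] ℝ) →L[ℝ] E) (σ₁₂ := RingHom.id ℝ) (𝕜' := ℝ)
  have hD : ContDiff ℝ (⊤ : ℕ∞) (fderiv ℝ hs) := hsm.fderiv_right (m := ((⊤ : ℕ∞) : WithTop ℕ∞)) (mod_cast le_top)
  -- derivative of `y ↦ (D h_#)(y)(h_#(y) p) q`
  have key : ∀ p q : E →L[ℝ] ℝ, hs x p = 0 → HasFDerivAt
      (fun y => fderiv ℝ hs y (hs y p) q)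
      (((fderiv ℝ hs x (hs x p)).comp (0 : E →L[ℝ] (E →L[ℝ] ℝ)))
        + ((fderiv ℝ hs x).comp
          ((hs x).comp (0 : E →L[ℝ] (E →L[ℝ] ℝ)) + (fderiv ℝ hs x).flip p)
        + (ContinuousLinearMap.flip (𝕜 := ℝ) (𝕜₂ := ℝ) (𝕜₃ := ℝ) (σ₁₃ := RingHom.id ℝ)
            (σ₂₃ := RingHom.id ℝ) (E := E) (F := E) (G := (E →L[ℝ] ℝ) →L[ℝ] E) (fderiv ℝ (fderiv ℝ hs) x)) (hs x p)).flip q) x := by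
    intro p q hp
    have Hin : HasFDerivAt (fun y => hs y p)
        ((hs x).comp (0 : E →L[ℝ] (E →L[ℝ] ℝ)) + (fderiv ℝ hs x).flip p) x :=
      (cd_hasFDerivAt hsm x).clm_apply (hasFDerivAt_const p x)
    have Hmid : HasFDerivAt (fun y => fderiv ℝ hs y (hs y p))
        ((fderiv ℝ hs x).comp
          ((hs x).comp (0 : E →L[ℝ] (E →L[ℝ] ℝ)) + (fderiv ℝ hs x).flip p)
          + (ContinuousLinearMap.flip (𝕜 := ℝ) (𝕜₂ := ℝ) (𝕜₃ := ℝ) (σ₁₃ := RingHom.id ℝ)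
            (σ₂₃ := RingHom.id ℝ) (E := E) (F := E) (G := (E →L[ℝ] ℝ) →L[ℝ] E) (fderiv ℝ (fderiv ℝ hs) x)) (hs x p)) x :=
      HasFDerivAt.clm_apply (𝕜 := ℝ) (E := E) (G := E) (H := (E →L[ℝ] ℝ) →L[ℝ] E)
        (cd_hasFDerivAt hD x) Hin
    exact Hmid.clm_apply (hasFDerivAt_const q x)
  have h1 := key a c ha
  have h2 := key c a hc
  have hG : HasFDerivAt (fun y : E => fderiv ℝ hs y (hs y a) c - fderiv ℝ hs y (hs y c) a)
      (_ - _) x := h1.sub h2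
  have hzero : (fun y : E => fderiv ℝ hs y (hs y a) c - fderiv ℝ hs y (hs y c) a)
      = fun _ => (0 : E) := by
    funext y; rw [codVec hs hsm hcod y a c]; simp
  rw [hzero] at hG
  have := hG.unique (hasFDerivAt_const 0 x)
  have h := congrFun (congrArg DFunLike.coe this) v
  simp only [ContinuousLinearMap.sub_apply, ContinuousLinearMap.add_apply,
    ContinuousLinearMap.comp_apply, ContinuousLinearMap.flip_apply, ha, hc, map_zero,
    ContinuousLinearMap.zero_apply, zero_add, add_zero, ContinuousLinearMap.coe_zero,
    Pi.zero_apply] at h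
  exact sub_eq_zero.mp h
  
theorem stmt7 [FiniteDimensional ℝ E]
    (hs : E → (E →L[ℝ] ℝ) →L[ℝ] E) (hsm : ContDiff ℝ (⊤ : ℕ∞) hs)
    (hsym : ∀ (x : E) (α β : E →L[ℝ] ℝ), β (hs x α) = α (hs x β))
    (hcod : Codazzi hs) (x : E) :
    -- (1) independence of the choice of smooth extensions
    (∀ a b : E →L[ℝ] ℝ, hs x a = 0 → hs x b = 0 →
      ∀ α α' β β' : E → (E →L[ℝ] ℝ),
        ContDiff ℝ (⊤ : ℕ∞) α → ContDiff ℝ (⊤ : ℕ∞) α' →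
        ContDiff ℝ (⊤ : ℕ∞) β → ContDiff ℝ (⊤ : ℕ∞) β' →
        α x = a → α' x = a → β x = b → β' x = b →
          Dop hs α β x = Dop hs α' β' x)
    ∧
    -- (2) the product stays in 𝔤_x = ker h_#(x)
    (∀ a b : E →L[ℝ] ℝ, hs x a = 0 → hs x b = 0 →
      ∀ α β : E → (E →L[ℝ] ℝ), ContDiff ℝ (⊤ : ℕ∞) α → ContDiff ℝ (⊤ : ℕ∞) β →
        α x = a → β x = b → hs x (Dop hs α β x) = 0)
    ∧
    -- (3a) commutativity
    (∀ a b : E →L[ℝ] ℝ, hs x a = 0 → hs x b = 0 →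
      ∀ α β : E → (E →L[ℝ] ℝ), ContDiff ℝ (⊤ : ℕ∞) α → ContDiff ℝ (⊤ : ℕ∞) β →
        α x = a → β x = b → Dop hs α β x = Dop hs β α x)
    ∧
    -- (3b) associativity: (a∘b)∘c = a∘(b∘c), where η and θ are any smooth
    -- one-forms extending a∘b and b∘c respectively
    (∀ a b c : E →L[ℝ] ℝ, hs x a = 0 → hs x b = 0 → hs x c = 0 →
      ∀ α β γ η θ : E → (E →L[ℝ] ℝ),
        ContDiff ℝ (⊤ : ℕ∞) α → ContDiff ℝ (⊤ : ℕ∞) β → ContDiff ℝ (⊤ : ℕ∞) γ →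
        ContDiff ℝ (⊤ : ℕ∞) η → ContDiff ℝ (⊤ : ℕ∞) θ →
        α x = a → β x = b → γ x = c →
        η x = Dop hs α β x → θ x = Dop hs β γ x →
          Dop hs η γ x = Dop hs α θ x) := by
  have P2 : ∀ a b : E →L[ℝ] ℝ, hs x a = 0 → hs x b = 0 →
      ∀ α β : E → (E →L[ℝ] ℝ), ContDiff ℝ (⊤ : ℕ∞) α → ContDiff ℝ (⊤ : ℕ∞) β →
        α x = a → β x = b → hs x (Dop hs α β x) = 0 := by
    intro a b ha hb α β hα hβ hax hbx
    rw [NormedSpace.eq_iff_forall_dual_eq ℝ]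
    intro c
    have h0 : hs x (α x) = 0 := by rw [hax]; exact ha
    calc c (hs x (Dop hs α β x)) = (Dop hs α β x) (hs x c) := hsym x _ c
      _ = (β x) ((fderiv ℝ hs x (hs x c)) (α x)) := keyEval hs hsm hα hβ h0 _
      _ = (β x) ((fderiv ℝ hs x (hs x (α x))) c) := by
            rw [codVec hs hsm hcod x c (α x)]
      _ = 0 := by rw [h0]; simp
      _ = c 0 := by simp
  refine ⟨?_, P2, ?_, ?_⟩
  · intro a b ha hb α α' β β' hα hα' hβ hβ' hax ha'x hbx hb'x
    ext v
    rw [keyEval hs hsm hα hβ (by rw [hax]; exact ha) v,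
      keyEval hs hsm hα' hβ' (by rw [ha'x]; exact ha) v, hax, ha'x, hbx, hb'x]
  · intro a b ha hb α β hα hβ hax hbx
    ext v
    rw [keyEval hs hsm hα hβ (by rw [hax]; exact ha) v,
      keyEval hs hsm hβ hα (by rw [hbx]; exact hb) v, hax, hbx]
    exact dsym hs hsm hsym x v a b
  · intro a b c ha hb hc α β γ η θ hα hβ hγ hη hθ hax hbx hcx hηx hθx
    have hη0 : hs x (η x) = 0 := by rw [hηx]; exact P2 a b ha hb α β hα hβ hax hbx
    have hα0 : hs x (α x) = 0 := by rw [hax]; exact ha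
    have hβ0 : hs x (β x) = 0 := by rw [hbx]; exact hb
    ext v
    calc Dop hs η γ x v
        = (γ x) ((fderiv ℝ hs x v) (η x)) := keyEval hs hsm hη hγ hη0 v
      _ = c ((fderiv ℝ hs x v) (Dop hs α β x)) := by rw [hcx, hηx]
      _ = (Dop hs α β x) ((fderiv ℝ hs x v) c) :=
            dsym hs hsm hsym x v (Dop hs α β x) c
      _ = (β x) ((fderiv ℝ hs x ((fderiv ℝ hs x v) c)) (α x)) :=
            keyEval hs hsm hα hβ hα0 _
      _ = b ((fderiv ℝ hs x ((fderiv ℝ hs x v) c)) a) := by rw [hax, hbx]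
      _ = b ((fderiv ℝ hs x ((fderiv ℝ hs x v) a)) c) := by
            rw [codDiff hs hsm hcod x a c ha hc v]
      _ = c ((fderiv ℝ hs x ((fderiv ℝ hs x v) a)) b) :=
            dsym hs hsm hsym x _ c b
      _ = (γ x) ((fderiv ℝ hs x ((fderiv ℝ hs x v) (α x))) (β x)) := by
            rw [hax, hbx, hcx]
      _ = (Dop hs β γ x) ((fderiv ℝ hs x v) (α x)) :=
            (keyEval hs hsm hβ hγ hβ0 _).symm
      _ = (θ x) ((fderiv ℝ hs x v) (α x)) := by rw [hθx]
      _ = Dop hs α θ x v := (keyEval hs hsm hα hθ hα0 v).symm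

end
end
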